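/- Let α = (α_1, …, α_d) ∈ (0,∞)^d, h(α) = min_j α_j, and p(α) = |{ j : α_j = h(α) }|. Define a(d, r, α) = |{ n ∈ ℤ_{≥0}^d : ∏_{j=1}^d (1 + n_j)^{α_j} < r }| for r > 1. Then a(d, r, α) ≍_{d,α} r^{1/h(α)} (log r)^{p(α)−1}, i.e., there are constants depending only on d and α bounding a(d,r,α) above and below by multiples of r^{1/h(α)} (log r)^{p(α)−1} for large r. -/

import Mathlib

/-!
Split off a coordinate `j0` with `α j0 = h`. Once the other coordinates `x` are fixed, the
admissible values of `n j0` are those with `1 + n j0 < T x`, where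
`T x = (r / ∏_{j ≠ j0} (1 + x j) ^ α j) ^ (1/h) = r ^ (1/h) ∏_{j ≠ j0} (1 + x j) ^ (-α j / h)`.
Summing `T x` over a box in `x` turns the count into `r ^ (1/h)` times a product of
one-dimensional sums `∑_m (1 + m) ^ (-α j / h)`: the `p - 1` other minimal coordinates give
harmonic sums of size `≍ log r`, all the others convergent series. For the lower bound the
minimal coordinates are restricted to `x j < r ^ (1/(2hd))` and the others to `0`, which keeps
`T x ≥ 2`, so that `T x - 1 ≥ T x / 2`.
-/

open Real Finset

theorem summable_inv_one_add_rpow {s : ℝ} (hs : 1 < s) :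
    Summable fun m : ℕ => ((1 + (m : ℝ)) ^ s)⁻¹ := by
  simpa [add_comm] using (summable_nat_add_iff 1).2 (Real.summable_nat_rpow_inv.2 hs)

theorem sum_range_inv_one_add_eq_harmonic (N : ℕ) :
    ∑ m ∈ range N, (1 + (m : ℝ))⁻¹ = harmonic N := by
  simp [harmonic, add_comm]

theorem sum_range_inv_one_add_rpow_le {a h : ℝ} (hh : 0 < h) (hle : h ≤ a) (N : ℕ) :
    ∑ m ∈ range N, ((1 + (m : ℝ)) ^ (a / h))⁻¹ ≤
      (if a = h then 1 + log N else 1) *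
        if a = h then 1 else ∑' m : ℕ, ((1 + (m : ℝ)) ^ (a / h))⁻¹ := by
  split_ifs with ha
  · simpa [ha, hh.ne', sum_range_inv_one_add_eq_harmonic] using harmonic_le_one_add_log N
  · have hs : 1 < a / h := (one_lt_div hh).2 (lt_of_le_of_ne hle (Ne.symm ha))
    simpa using (summable_inv_one_add_rpow hs).sum_le_tsum _ fun _ _ => by positivity

variable {ι : Type*}

theorem prod_subtype_ne_ite_eq_pow {M : Type*} [Fintype ι] [DecidableEq ι] [CommMonoid M]
    {P : ι → Prop} [DecidablePred P] {j0 : ι} (hP : P j0) (a : M) :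
    ∏ j : {j // j ≠ j0}, (if P j then a else 1) = a ^ (#(univ.filter P) - 1) := by
  rw [prod_ite, prod_const, prod_const_one, mul_one, card_filter, card_filter,
    Fintype.sum_eq_add_sum_subtype_ne _ j0, if_pos hP]
  simp

section Fibres

variable [DecidableEq ι] {j0 : ι} {A : Set (ι → ℕ)} {s : Finset ({j // j ≠ j0} → ℕ)}
  {T : ({j // j ≠ j0} → ℕ) → ℝ}

theorem ncard_le_sum_of_lt_on_fibres (hT : ∀ x ∈ s, 0 ≤ T x)
    (hmem : ∀ n ∈ A, (fun j : {j // j ≠ j0} => n j) ∈ s ∧ 1 + (n j0 : ℝ) < T fun j => n j) :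
    (A.ncard : ℝ) ≤ ∑ x ∈ s, T x := by
  have hcard : A.ncard ≤ #(s.sigma fun x => range ⌊T x⌋₊) := by
    rw [← Set.ncard_coe_finset]
    refine Set.ncard_le_ncard_of_injOn (fun n => ⟨fun j => n j, n j0⟩) (fun n hn => ?_) ?_
    · obtain ⟨hs, hlt⟩ := hmem n hn
      simp only [coe_sigma, Set.mem_sigma_iff, mem_coe, mem_range]
      exact ⟨hs, Nat.le_floor (by push_cast; linarith)⟩
    · intro n _ n' _ he
      simp only [Sigma.mk.injEq, heq_eq_eq] at he
      funext j
      by_cases hj : j = j0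
      · exact hj ▸ he.2
      · exact congrFun he.1 ⟨j, hj⟩
  calc (A.ncard : ℝ) ≤ #(s.sigma fun x => range ⌊T x⌋₊) := by exact_mod_cast hcard
    _ = ∑ x ∈ s, (⌊T x⌋₊ : ℝ) := by simp [card_sigma]
    _ ≤ ∑ x ∈ s, T x := sum_le_sum fun x hx => Nat.floor_le (hT x hx)

theorem sum_sub_one_le_ncard_of_lt_on_fibres (hfin : A.Finite)
    (hmem : ∀ x ∈ s, ∀ n : ι → ℕ, (fun j : {j // j ≠ j0} => n j) = x → 1 + (n j0 : ℝ) < T x →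
      n ∈ A) :
    ∑ x ∈ s, (T x - 1) ≤ (A.ncard : ℝ) := by
  let e := Equiv.funSplitAt j0 ℕ
  have hcard : #(s.sigma fun x => range (⌈T x⌉₊ - 1)) ≤ A.ncard := by
    rw [← Set.ncard_coe_finset]
    refine Set.ncard_le_ncard_of_injOn (fun y => e.symm (y.2, y.1)) (fun y hy => ?_) ?_ hfin
    · simp only [coe_sigma, Set.mem_sigma_iff, mem_coe, mem_range] at hy
      have he := e.apply_symm_apply (y.2, y.1)
      simp only [e, Equiv.funSplitAt_apply, Prod.mk.injEq] at he
      refine hmem y.1 hy.1 _ he.2 ?_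
      rw [he.1]
      exact_mod_cast Nat.lt_ceil.1 (by omega)
    · intro y _ y' _ he
      have := e.symm.injective he
      simp only [Prod.mk.injEq] at this
      exact Sigma.ext this.2 (heq_of_eq this.1)
  calc ∑ x ∈ s, (T x - 1) ≤ ∑ x ∈ s, ((⌈T x⌉₊ - 1 : ℕ) : ℝ) := by
        refine sum_le_sum fun x _ => ?_
        calc T x - 1 ≤ ⌈T x⌉₊ - 1 := by linarith [Nat.le_ceil (T x)]
          _ ≤ ((⌈T x⌉₊ - 1 : ℕ) : ℝ) := by cases ⌈T x⌉₊ <;> simp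
    _ = #(s.sigma fun x => range (⌈T x⌉₊ - 1)) := by simp [card_sigma]
    _ ≤ A.ncard := by exact_mod_cast hcard

end Fibres

variable [Fintype ι]

def hyperbolicCross (α : ι → ℝ) (r : ℝ) : Set (ι → ℕ) :=
  {n | ∏ j, (1 + (n j : ℝ)) ^ α j < r}

section HyperbolicCross

variable {α : ι → ℝ} {h r : ℝ}

theorem one_add_rpow_lt_of_mem_hyperbolicCross (hα : ∀ j, 0 ≤ α j) {n : ι → ℕ}
    (hn : n ∈ hyperbolicCross α r) (j : ι) : (1 + (n j : ℝ)) ^ α j < r := by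
  classical
  rw [hyperbolicCross, Set.mem_ofPred_eq, Fintype.prod_eq_mul_prod_subtype_ne _ j] at hn
  refine lt_of_le_of_lt (le_mul_of_one_le_right (by positivity) ?_) hn
  exact one_le_prod fun i _ => one_le_rpow (by simp) (hα i)

theorem lt_floor_of_mem_hyperbolicCross (hh : 0 < h) (hle : ∀ j, h ≤ α j) {n : ι → ℕ}
    (hn : n ∈ hyperbolicCross α r) (j : ι) : n j < ⌊r ^ h⁻¹⌋₊ := by
  have hlt : (1 + (n j : ℝ)) ^ h < r :=
    (rpow_le_rpow_of_exponent_le (by simp) (hle j)).trans_lt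
      (one_add_rpow_lt_of_mem_hyperbolicCross (fun i => hh.le.trans (hle i)) hn j)
  have hr : 0 ≤ r := (rpow_nonneg (by positivity) h).trans hlt.le
  have := (lt_rpow_inv_iff_of_pos (by positivity) hr hh).2 hlt
  exact Nat.le_floor (by push_cast; linarith)

theorem finite_hyperbolicCross (hh : 0 < h) (hle : ∀ j, h ≤ α j) :
    (hyperbolicCross α r).Finite := by
  classical
  exact (Fintype.piFinset fun _ : ι => range ⌊r ^ h⁻¹⌋₊).finite_toSet.subset fun _ hn => by
    simpa using lt_floor_of_mem_hyperbolicCross hh hle hn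

theorem mem_hyperbolicCross_iff [DecidableEq ι] (hr : 0 < r) {j0 : ι} (h0 : 0 < α j0)
    (n : ι → ℕ) :
    n ∈ hyperbolicCross α r ↔
      1 + (n j0 : ℝ) < (r / ∏ j : {j // j ≠ j0}, (1 + (n j : ℝ)) ^ α j) ^ (α j0)⁻¹ := by
  have hprod : 0 < ∏ j : {j // j ≠ j0}, (1 + (n j : ℝ)) ^ α j :=
    prod_pos fun _ _ => by positivity
  rw [hyperbolicCross, Set.mem_ofPred_eq, Fintype.prod_eq_mul_prod_subtype_ne _ j0,
    lt_rpow_inv_iff_of_pos (by positivity) (by positivity) h0, lt_div_iff₀ hprod]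

theorem div_prod_rpow_inv (hr : 0 ≤ r) (h : ℝ) (x : ι → ℕ) :
    (r / ∏ j, (1 + (x j : ℝ)) ^ α j) ^ h⁻¹ =
      r ^ h⁻¹ * ∏ j, ((1 + (x j : ℝ)) ^ (α j / h))⁻¹ := by
  rw [div_rpow hr (prod_nonneg fun _ _ => by positivity),
    ← finsetProd_rpow _ _ fun _ _ => by positivity, div_eq_mul_inv, ← prod_inv_distrib]
  congr 2 with j
  rw [← rpow_mul (by positivity), div_eq_mul_inv]

theorem ncard_hyperbolicCross_le_prod_sum [DecidableEq ι] (hh : 0 < h) (hle : ∀ j, h ≤ α j)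
    {j0 : ι} (hj0 : α j0 = h) (hr : 0 < r) :
    ((hyperbolicCross α r).ncard : ℝ) ≤
      r ^ h⁻¹ * ∏ j : {j // j ≠ j0}, ∑ m ∈ range ⌊r ^ h⁻¹⌋₊, ((1 + (m : ℝ)) ^ (α j / h))⁻¹ := by
  calc ((hyperbolicCross α r).ncard : ℝ)
      ≤ ∑ x ∈ Fintype.piFinset fun _ => range ⌊r ^ h⁻¹⌋₊,
          (r / ∏ j : {j // j ≠ j0}, (1 + (x j : ℝ)) ^ α j) ^ h⁻¹ := by
        refine ncard_le_sum_of_lt_on_fibres (fun _ _ => by positivity) fun n hn => ⟨?_, ?_⟩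
        · exact Fintype.mem_piFinset.2 fun j =>
            mem_range.2 (lt_floor_of_mem_hyperbolicCross hh hle hn j)
        · have := (mem_hyperbolicCross_iff hr (hj0 ▸ hh) n).1 hn
          rwa [hj0] at this
    _ = _ := by simp_rw [div_prod_rpow_inv hr.le, ← mul_sum, prod_univ_sum]

theorem harmonic_mul_le_ncard_hyperbolicCross [DecidableEq ι] (hh : 0 < h)
    (hle : ∀ j, h ≤ α j) {j0 : ι} (hj0 : α j0 = h) (hr : 0 < r) {M : ℕ} (hM : 1 ≤ M)
    (hMr : 2 * (M : ℝ) ^ Fintype.card ι ≤ r ^ h⁻¹) :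
    r ^ h⁻¹ / 2 * ∏ j : {j // j ≠ j0}, (if α j = h then (harmonic M : ℝ) else 1) ≤
      (hyperbolicCross α r).ncard := by
  set s := Fintype.piFinset fun j : {j // j ≠ j0} => if α j = h then range M else {0}
  set T : ({j // j ≠ j0} → ℕ) → ℝ := fun x => (r / ∏ j, (1 + (x j : ℝ)) ^ α j) ^ h⁻¹
  have hM1 : (1 : ℝ) ≤ M := by exact_mod_cast hM
  have hweight : ∀ x ∈ s, ∀ j, (M : ℝ)⁻¹ ≤ ((1 + (x j : ℝ)) ^ (α j / h))⁻¹ := by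
    intro x hx j
    have hxj := Fintype.mem_piFinset.1 hx j
    split_ifs at hxj with hj
    · have : 1 + x j ≤ M := by have := mem_range.1 hxj; omega
      have : 1 + (x j : ℝ) ≤ M := by exact_mod_cast this
      rw [hj, div_self hh.ne', rpow_one]
      gcongr
    · simp [mem_singleton.1 hxj, inv_le_one_of_one_le₀ hM1]
  have hT : ∀ x ∈ s, 2 ≤ T x := by
    intro x hx
    calc (2 : ℝ) ≤ r ^ h⁻¹ * ((M : ℝ) ^ Fintype.card ι)⁻¹ := by
          rwa [← div_eq_mul_inv, le_div_iff₀ (by positivity)]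
      _ ≤ r ^ h⁻¹ * ∏ _j : {j // j ≠ j0}, (M : ℝ)⁻¹ := by
          rw [prod_const, card_univ, ← inv_pow]
          gcongr r ^ h⁻¹ * ?_
          exact pow_le_pow_of_le_one (by positivity) (inv_le_one_of_one_le₀ hM1)
            (Fintype.card_subtype_le _)
      _ ≤ T x := by
          rw [show T x = _ from div_prod_rpow_inv hr.le h x]
          gcongr r ^ h⁻¹ * ?_
          exact prod_le_prod (fun _ _ => by positivity) fun j _ => hweight x hx j
  calc r ^ h⁻¹ / 2 * ∏ j : {j // j ≠ j0}, (if α j = h then (harmonic M : ℝ) else 1)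
      = ∑ x ∈ s, T x / 2 := by
        have hfactor : ∀ j : {j // j ≠ j0}, (if α j = h then (harmonic M : ℝ) else 1) =
            ∑ m ∈ if α j = h then range M else {0}, ((1 + (m : ℝ)) ^ (α j / h))⁻¹ := by
          intro j
          split_ifs with hj
          · simp [hj, hh.ne', sum_range_inv_one_add_eq_harmonic]
          · simp
        rw [prod_congr rfl fun j _ => hfactor j, prod_univ_sum, div_mul_eq_mul_div, mul_sum,
          sum_div]
        simp only [T, s, div_prod_rpow_inv hr.le]
    _ ≤ ∑ x ∈ s, (T x - 1) := sum_le_sum fun x hx => by linarith [hT x hx]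
    _ ≤ (hyperbolicCross α r).ncard := by
        refine sum_sub_one_le_ncard_of_lt_on_fibres (finite_hyperbolicCross hh hle)
          fun x _ n hnx hlt => (mem_hyperbolicCross_iff hr (hj0 ▸ hh) n).2 ?_
        subst hnx
        rwa [hj0]

end HyperbolicCross

section Asymptotics

variable {α : ι → ℝ} {h : ℝ}

theorem exists_ncard_hyperbolicCross_le (hh : 0 < h) (hle : ∀ j, h ≤ α j) {j0 : ι}
    (hj0 : α j0 = h) :
    ∃ C > 0, ∀ r, exp 1 ≤ r → ((hyperbolicCross α r).ncard : ℝ) ≤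
      C * r ^ h⁻¹ * log r ^ (#(univ.filter fun j => α j = h) - 1) := by
  classical
  set p := #(univ.filter fun j => α j = h)
  set ζ : {j // j ≠ j0} → ℝ := fun j =>
    if α j = h then 1 else ∑' m : ℕ, ((1 + (m : ℝ)) ^ (α j / h))⁻¹
  have hζ : 0 < ∏ j, ζ j := by
    refine prod_pos fun j _ => ?_
    simp only [ζ]
    split_ifs with hj
    · exact one_pos
    · have hs : 1 < α j / h := (one_lt_div hh).2 (lt_of_le_of_ne (hle j) (Ne.symm hj))
      exact (summable_inv_one_add_rpow hs).tsum_pos (fun _ => by positivity) 0 (by positivity)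
  refine ⟨(1 + h⁻¹) ^ (p - 1) * ∏ j, ζ j, by positivity, fun r hr => ?_⟩
  have hr0 : 0 < r := (exp_pos 1).trans_le hr
  have hlog : 1 ≤ log r := by rwa [le_log_iff_exp_le hr0]
  set N := ⌊r ^ h⁻¹⌋₊
  have hN : 1 + log N ≤ (1 + h⁻¹) * log r := by
    have hrh : 1 ≤ r ^ h⁻¹ := one_le_rpow (by linarith [add_one_le_exp 1]) (by positivity)
    have hN1 : (1 : ℝ) ≤ N := by exact_mod_cast Nat.le_floor (by simpa using hrh)
    have : log N ≤ h⁻¹ * log r := by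
      rw [← log_rpow hr0]
      exact log_le_log (by linarith) (Nat.floor_le (by positivity))
    nlinarith
  calc ((hyperbolicCross α r).ncard : ℝ)
      ≤ r ^ h⁻¹ * ∏ j : {j // j ≠ j0}, ∑ m ∈ range N, ((1 + (m : ℝ)) ^ (α j / h))⁻¹ :=
        ncard_hyperbolicCross_le_prod_sum hh hle hj0 hr0
    _ ≤ r ^ h⁻¹ * ∏ j : {j // j ≠ j0}, ((if α j = h then 1 + log N else 1) * ζ j) := by
        gcongr with j
        exact sum_range_inv_one_add_rpow_le hh (hle j) N
    _ = (∏ j, ζ j) * r ^ h⁻¹ * (1 + log N) ^ (p - 1) := by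
        rw [prod_mul_distrib, prod_subtype_ne_ite_eq_pow (P := fun j => α j = h) hj0]
        ring
    _ ≤ (∏ j, ζ j) * r ^ h⁻¹ * ((1 + h⁻¹) * log r) ^ (p - 1) := by
        gcongr
    _ = (1 + h⁻¹) ^ (p - 1) * (∏ j, ζ j) * r ^ h⁻¹ * log r ^ (p - 1) := by
        rw [mul_pow]
        ring

theorem exists_le_ncard_hyperbolicCross (hh : 0 < h) (hle : ∀ j, h ≤ α j) {j0 : ι}
    (hj0 : α j0 = h) :
    ∃ c > 0, ∀ r, 2 ^ (2 * h) ≤ r →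
      c * r ^ h⁻¹ * log r ^ (#(univ.filter fun j => α j = h) - 1) ≤
        (hyperbolicCross α r).ncard := by
  classical
  set p := #(univ.filter fun j => α j = h)
  set D := Fintype.card ι
  have hD : 0 < D := Fintype.card_pos_iff.2 ⟨j0⟩
  refine ⟨(2 * h * D)⁻¹ ^ (p - 1) / 2, by positivity, fun r hr => ?_⟩
  have hr1 : 1 ≤ r := (one_le_rpow (by norm_num) (by positivity)).trans hr
  have hr0 : 0 < r := by linarith
  set t := r ^ (2 * h)⁻¹
  have ht : 2 ≤ t := by
    calc (2 : ℝ) = (2 ^ (2 * h)) ^ (2 * h)⁻¹ := by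
          rw [← rpow_mul (by norm_num), mul_inv_cancel₀ (by positivity), rpow_one]
      _ ≤ t := rpow_le_rpow (by positivity) hr (by positivity)
  set M := ⌊r ^ (2 * h * D)⁻¹⌋₊
  have hMt : (M : ℝ) ^ D ≤ t := by
    calc (M : ℝ) ^ D ≤ (r ^ (2 * h * D)⁻¹) ^ D := by
          gcongr
          exact Nat.floor_le (by positivity)
      _ = t := by
          rw [← rpow_natCast, ← rpow_mul hr0.le]
          congr 1
          field_simp
  have hM : 1 ≤ M := Nat.le_floor (by simpa using one_le_rpow hr1 (by positivity))
  have hMr : 2 * (M : ℝ) ^ D ≤ r ^ h⁻¹ := by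
    have : r ^ h⁻¹ = t * t := by
      rw [← rpow_add hr0]
      congr 1
      field_simp
      ring
    nlinarith
  have hlogM : log r / (2 * h * D) ≤ harmonic M := by
    calc log r / (2 * h * D) = log (r ^ (2 * h * D)⁻¹) := by
          rw [log_rpow hr0, inv_mul_eq_div]
      _ ≤ log ((M + 1 : ℕ) : ℝ) := by
          refine log_le_log (by positivity) ?_
          push_cast
          exact (Nat.lt_floor_add_one _).le
      _ ≤ harmonic M := log_add_one_le_harmonic M
  calc (2 * h * D)⁻¹ ^ (p - 1) / 2 * r ^ h⁻¹ * log r ^ (p - 1)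
      = r ^ h⁻¹ / 2 * (log r / (2 * h * D)) ^ (p - 1) := by ring
    _ ≤ r ^ h⁻¹ / 2 * (harmonic M : ℝ) ^ (p - 1) := by
        gcongr
        exact div_nonneg (log_nonneg hr1) (by positivity)
    _ = r ^ h⁻¹ / 2 * ∏ j : {j // j ≠ j0}, (if α j = h then (harmonic M : ℝ) else 1) := by
        rw [prod_subtype_ne_ite_eq_pow (P := fun j => α j = h) hj0]
    _ ≤ (hyperbolicCross α r).ncard :=
        harmonic_mul_le_ncard_hyperbolicCross hh hle hj0 hr0 hM hMr

end Asymptotics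

theorem stmt5_general (d : ℕ) (α : Fin d → ℝ) (hα : ∀ j, 0 < α j)
    (h : ℝ) (hle : ∀ j, h ≤ α j) (hmem : ∃ j, α j = h)
    (p : ℕ) (hp : p = (Finset.univ.filter (fun j => α j = h)).card) :
    ∃ c₁ c₂ : ℝ, 0 < c₁ ∧ 0 < c₂ ∧ ∃ R : ℝ, 1 < R ∧ ∀ r : ℝ, R ≤ r →
      c₁ * r ^ (1 / h) * (Real.log r) ^ (p - 1) ≤
        (Set.ncard {n : Fin d → ℕ | (∏ j, (1 + (n j : ℝ)) ^ (α j)) < r} : ℝ) ∧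
      (Set.ncard {n : Fin d → ℕ | (∏ j, (1 + (n j : ℝ)) ^ (α j)) < r} : ℝ) ≤
        c₂ * r ^ (1 / h) * (Real.log r) ^ (p - 1) := by
  obtain ⟨j0, hj0⟩ := hmem
  have hh : 0 < h := hj0 ▸ hα j0
  obtain ⟨c₁, hc₁, hlower⟩ := exists_le_ncard_hyperbolicCross hh hle hj0
  obtain ⟨c₂, hc₂, hupper⟩ := exists_ncard_hyperbolicCross_le hh hle hj0
  refine ⟨c₁, c₂, hc₁, hc₂, max (exp 1) (2 ^ (2 * h)), ?_, fun r hr => ?_⟩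
  · exact lt_max_of_lt_left (one_lt_exp_iff.2 one_pos)
  rw [one_div, hp]
  exact ⟨hlower r (le_of_max_le_right hr), hupper r (le_of_max_le_left hr)⟩

/-- Anisotropic hyperbolic cross counting: with `h = min_j α_j` and `p` the number of
coordinates attaining the minimum, the count `a(d,r,α)` of `n ∈ ℤ_{≥0}^d` with
`∏_j (1+n_j)^{α_j} < r` satisfies `a(d,r,α) ≍_{d,α} r^{1/h} (log r)^{p−1}` for large `r`. -/
theorem stmt5 (d : ℕ) (hd : 0 < d) (α : Fin d → ℝ) (hα : ∀ j, 0 < α j)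
    (h : ℝ) (hle : ∀ j, h ≤ α j) (hmem : ∃ j, α j = h)
    (p : ℕ) (hp : p = (Finset.univ.filter (fun j => α j = h)).card) :
    ∃ c₁ c₂ : ℝ, 0 < c₁ ∧ 0 < c₂ ∧ ∃ R : ℝ, 1 < R ∧ ∀ r : ℝ, R ≤ r →
      c₁ * r ^ (1 / h) * (Real.log r) ^ (p - 1) ≤
        (Set.ncard {n : Fin d → ℕ | (∏ j, (1 + (n j : ℝ)) ^ (α j)) < r} : ℝ) ∧
      (Set.ncard {n : Fin d → ℕ | (∏ j, (1 + (n j : ℝ)) ^ (α j)) < r} : ℝ) ≤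
        c₂ * r ^ (1 / h) * (Real.log r) ^ (p - 1) :=
  stmt5_general d α hα h hle hmem p hp
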